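/- arXiv:1505.07582 — 2 statements merged into one kernel-verified Lean document; each statement's English description precedes it below -/
import Mathlib

section
/- Suppose K is cyclotomically self-dual, with its canonical bilinear form B. A basis (r_k)_{k=1}^{R+1} of K is a Witt basis if and only if B(r_i, r_j) = 0 whenever i + j ≠ R + 2. -/
/-!
Expand everything in the basis `r`. Since `Wr†` is alternating and multilinear over `ℂ`, on
`(R+1)`-tuples `Wr†(∑ M_{tm} r_m) = det M · Wr†(r)`, and `Wr†(r) ≠ 0` by the frame condition at
`x = 0`; on `R`-tuples (Cauchy–Binet) `Wr†(∑ N_{tm} r_m) = ∑ₘ minorₘ(N) · gₘ`, where `gₘ` is `Wr†`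
of `r` with `r_m` omitted.

If `r` is a Witt basis, `r_j(-x)` is a multiple of `Wr†` of a tuple containing every `r_i` with
`i + j ≠ R + 2`, so `B(r_i, r_j) = Wr†(r_i, …)` vanishes by alternation. Conversely, self-duality
gives `r_j(-x) = ∑ₖ aₖ gₖ`. Every vector is the vector of maximal minors of some `R × (R+1)`
matrix (border a basis of the kernel of the matching linear form), so this is
`Wr†(w)` for a tuple `w` in `K`, and then `B(r_i, r_j) = ± aᵢ Wr†(r)`: only `a_{R+2-j}` survives.
-/

open Polynomial

noncomputable section

/-- The field ℂ(s) of rational functions in the variable s = x^(1/2). -/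
abbrev Ff : Type := RatFunc ℂ

/-- Formal derivative d/ds on ℂ(s). -/
def dS (f : Ff) : Ff :=
  (algebraMap (Polynomial ℂ) Ff (Polynomial.derivative f.num) *
      algebraMap (Polynomial ℂ) Ff f.denom -
    algebraMap (Polynomial ℂ) Ff f.num *
      algebraMap (Polynomial ℂ) Ff (Polynomial.derivative f.denom)) /
  (algebraMap (Polynomial ℂ) Ff f.denom) ^ 2

/-- Derivative d/dx = (2s)⁻¹ d/ds, where x = s². -/
def dX (f : Ff) : Ff := (2 * (RatFunc.X : Ff))⁻¹ * dS f

/-- Wronskian determinant with respect to x. -/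
def Wr {k : ℕ} (u : Fin k → Ff) : Ff :=
  Matrix.det (Matrix.of fun i j : Fin k => dX^[(j : ℕ)] (u i))

/-- Degree in x (an element of ½ℤ realized in ℚ; junk value for f = 0). -/
def degX (f : Ff) : ℚ := (RatFunc.intDegree f : ℚ) / 2

/-- Degree in x, as a complex number. -/
def degXC (f : Ff) : ℂ := (RatFunc.intDegree f : ℂ) / 2

/-- The map f(x) ↦ f(−x), i.e. the substitution s ↦ i·s (x^m ↦ e^{mπi} x^m). -/
def negX (f : Ff) : Ff :=
  algebraMap (Polynomial ℂ) Ff (f.num.comp (Polynomial.C Complex.I * Polynomial.X)) /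
  algebraMap (Polynomial ℂ) Ff (f.denom.comp (Polynomial.C Complex.I * Polynomial.X))

/-- Quasi-polynomials: polynomials in s = x^(1/2). -/
def IsQP (f : Ff) : Prop := ∃ p : Polynomial ℂ, f = algebraMap (Polynomial ℂ) Ff p

/-- Elements of ℂ[x] (even quasi-polynomials). -/
def IsEvenQP (f : Ff) : Prop :=
  ∃ p : Polynomial ℂ, f = algebraMap (Polynomial ℂ) Ff (p.comp (Polynomial.X ^ 2))

/-- Elements of x^(1/2)·ℂ[x] (odd quasi-polynomials). -/
def IsOddQP (f : Ff) : Prop :=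
  ∃ p : Polynomial ℂ, f = RatFunc.X * algebraMap (Polynomial ℂ) Ff (p.comp (Polynomial.X ^ 2))

/-- The subspace ℂ[x] of Ff. -/
def evenSub : Submodule ℂ Ff := Submodule.span ℂ {f | IsEvenQP f}

/-- The subspace x^(1/2)·ℂ[x] of Ff. -/
def oddSub : Submodule ℂ Ff := Submodule.span ℂ {f | IsOddQP f}

/-- A subspace V is decomposable if V = (V ∩ ℂ[x]) ⊕ (V ∩ x^(1/2)ℂ[x]). -/
def Decomposable (K : Submodule ℂ Ff) : Prop := K = (K ⊓ evenSub) ⊔ (K ⊓ oddSub)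

/-- The simple root α_i = ε_{i+1} − ε_i of type A_R. -/
def alphaV (R : ℕ) (i : Fin R) : Fin (R+1) → ℂ :=
  fun j => (if j = Fin.succ i then 1 else 0) - (if j = Fin.castSucc i then 1 else 0)

/-- The pairing ⟨λ, α_i^∨⟩ = λ_{i+1} − λ_i. -/
def pairA (R : ℕ) (lam : Fin (R+1) → ℂ) (i : Fin R) : ℂ := lam (Fin.succ i) - lam (Fin.castSucc i)

/-- The simple reflection s_i(λ) = λ − ⟨λ, α_i^∨⟩ α_i. -/
def reflA (R : ℕ) (i : Fin R) (lam : Fin (R+1) → ℂ) : Fin (R+1) → ℂ :=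
  fun j => lam j - pairA R lam i * alphaV R i j

/-- A vector ρ with ⟨ρ, α_i^∨⟩ = 1 for all i. -/
def rhoV (R : ℕ) : Fin (R+1) → ℂ := fun j => ((j : ℕ) : ℂ)

/-- sProdL R k = s_1 ∘ s_2 ∘ ⋯ ∘ s_k (in paper's 1-based indexing). -/
def sProdL (R : ℕ) : ℕ → (Fin (R+1) → ℂ) → (Fin (R+1) → ℂ)
  | 0 => fun lam => lam
  | (k+1) => fun lam => if h : k < R then sProdL R k (reflA R ⟨k, h⟩ lam) else sProdL R k lam

/-- sProdR R t = s_R ∘ s_{R-1} ∘ ⋯ ∘ s_{R-t+1} (in paper's 1-based indexing). -/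
def sProdR (R : ℕ) : ℕ → (Fin (R+1) → ℂ) → (Fin (R+1) → ℂ)
  | 0 => fun lam => lam
  | (t+1) => fun lam =>
      if h : R - 1 - t < R then sProdR R t (reflA R ⟨R - 1 - t, h⟩ lam) else sProdR R t lam

/-- d_k := ⟨Λ − (s_1 ⋯ s_{k-1})·Λ̃_∞, ε_1⟩, where · is the shifted action (0-indexed k). -/
def dVal (R : ℕ) (Lam Linf : Fin (R+1) → ℂ) (k : Fin (R+1)) : ℂ :=
  Lam 0 - (sProdL R (k : ℕ) (fun j => Linf j + rhoV R j) 0 - rhoV R 0)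

/-- d†_k := −⟨Λ − (s_R ⋯ s_k)·Λ̃_∞, ε_{R+1}⟩ (0-indexed k). -/
def dDag (R : ℕ) (Lam Linf : Fin (R+1) → ℂ) (k : Fin (R+1)) : ℂ :=
  -(Lam (Fin.last R) -
    (sProdR R (R - (k : ℕ)) (fun j => Linf j + rhoV R j) (Fin.last R) - rhoV R (Fin.last R)))

/-- M_i = 1 if R = 2n−1 and i = n (paper indexing: i is (i:ℕ)+1), else 2. -/
def Mi' (R n : ℕ) (i : Fin R) : ℕ := if R = 2*n - 1 ∧ (i : ℕ) + 1 = n then 1 else 2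

/-- The standing type-A data and assumptions of the paper, Section 6. -/
structure TypeASetting where
  R : ℕ
  n : ℕ
  p : ℕ
  N : ℕ
  hR1 : 1 ≤ R
  hRn : R = 2*n - 1 ∨ R = 2*n
  hpn : p ≤ n
  /-- the dominant integral weights Λ_1, …, Λ_N -/
  Lam : Fin N → Fin (R+1) → ℂ
  /-- the weights σΛ_1, …, σΛ_N -/
  sLam : Fin N → Fin (R+1) → ℂ
  /-- the weight Λ_0 at the origin -/
  Lam0 : Fin (R+1) → ℂ
  /-- the dominant weight Λ̃_∞ -/
  Linf : Fin (R+1) → ℂ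
  /-- the marked points z_1, …, z_N -/
  z : Fin N → ℂ
  /-- integer witnesses: e0 i = 2⟨Λ_0, α_i^∨⟩ -/
  e0 : Fin R → ℤ
  /-- natural number witnesses: mL s i = ⟨Λ_s, α_i^∨⟩ -/
  mL : Fin N → Fin R → ℕ
  hmL : ∀ s i, ((mL s i : ℕ) : ℂ) = pairA R (Lam s) i
  hsLam : ∀ s i, pairA R (sLam s) i = pairA R (Lam s) (Fin.rev i)
  hLam0sym : ∀ i, pairA R Lam0 i = pairA R Lam0 (Fin.rev i)
  he0 : ∀ i, ((e0 i : ℤ) : ℂ) = 2 * pairA R Lam0 i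
  hLam0int : ∀ i : Fin R, (i : ℕ) + 1 ≠ p → (i : ℕ) + 1 ≠ R + 1 - p →
      ∃ m : ℕ, ((Mi' R n i : ℕ) : ℂ) * pairA R Lam0 i = 2 * m
  hLam0p : 0 < p → ∀ i : Fin R, (i : ℕ) + 1 = p →
      (2 * p ≤ R → ∃ m : ℕ, pairA R Lam0 i = (2 * (m : ℂ) - 1) / 2) ∧
      (p = n → R = 2*n - 1 → ∃ m : ℕ, pairA R Lam0 i = 2 * (m : ℂ) + 1)
  hz0 : ∀ s, z s ≠ 0
  hzz : ∀ s t, s ≠ t → z s ≠ z t ∧ z s ≠ - z t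
  hLinfDom : ∀ i, ∃ r : ℝ, 0 ≤ r ∧ pairA R Linf i = (r : ℂ)
  hroot : ∃ kc : Fin R → ℕ, ∀ j,
      (Lam0 j + ∑ s, (Lam s j + sLam s j)) - Linf j = ∑ i, ((kc i : ℕ) : ℂ) * alphaV R i j
  hdchain : ∃ dr : Fin (R+1) → ℚ,
      (∀ k, dVal R (fun j => Lam0 j + ∑ s, (Lam s j + sLam s j)) Linf k = ((dr k : ℚ) : ℂ)) ∧
      0 ≤ dr 0 ∧ StrictMono dr

namespace TypeASetting

/-- The weight Λ = Λ_0 + Σ_s (Λ_s + σΛ_s). -/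
def LamT (S : TypeASetting) : Fin (S.R+1) → ℂ :=
  fun j => S.Lam0 j + ∑ s, (S.Lam s j + S.sLam s j)

/-- The exponents d_1, …, d_{R+1} (0-indexed). -/
def d (S : TypeASetting) (k : Fin (S.R+1)) : ℂ := dVal S.R S.LamT S.Linf k

/-- The dual exponents d†_1, …, d†_{R+1} (0-indexed). -/
def ddag (S : TypeASetting) (k : Fin (S.R+1)) : ℂ := dDag S.R S.LamT S.Linf k

/-- T̃_i(x) = x^{⟨Λ_0,α_i^∨⟩} ∏_s (x−z_s)^{⟨Λ_s,α_i^∨⟩} (x+z_s)^{⟨Λ_s,α_{R+1−i}^∨⟩},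
with x = s² (so x^{⟨Λ_0,α_i^∨⟩} = s^{e0 i}); defined on ℕ with junk value 1 for i ≥ R. -/
def T (S : TypeASetting) (i : ℕ) : Ff :=
  if h : i < S.R then
    (RatFunc.X : Ff) ^ (S.e0 ⟨i, h⟩) *
      ∏ s, algebraMap (Polynomial ℂ) Ff
        ((Polynomial.X ^ 2 - Polynomial.C (S.z s)) ^ (S.mL s ⟨i, h⟩) *
         (Polynomial.X ^ 2 + Polynomial.C (S.z s)) ^ (S.mL s (Fin.rev ⟨i, h⟩)))
  else 1

/-- Divided Wronskian Wr†(u_1,…,u_k) = Wr(u_1,…,u_k)/(T̃_1^{k−1} ⋯ T̃_{k−1}). -/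
def WrD (S : TypeASetting) {k : ℕ} (u : Fin k → Ff) : Ff :=
  Wr u / ∏ j ∈ Finset.range (k - 1), S.T j ^ (k - 1 - j)

/-- K has frame T̃_1,…,T̃_R; Λ̃_∞: conditions (i), (ii), (iii) of Definition 6.5. -/
def HasFrame (S : TypeASetting) (K : Submodule ℂ Ff) : Prop :=
  (∀ f ∈ K, IsQP f) ∧
  (∃ u : Fin (S.R+1) → Ff, (∀ k, u k ∈ K) ∧ LinearIndependent ℂ u ∧
      Submodule.span ℂ (Set.range u) = K ∧ ∀ k, degXC (u k) = S.d k) ∧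
  (∀ kk : ℕ, 1 ≤ kk → kk ≤ S.R + 1 → ∀ zz : ℂ, zz ≠ 0 →
    (∀ v : Fin kk → Ff, (∀ j, v j ∈ K) → ∀ s0 : ℂ, s0 ^ 2 = zz →
        Polynomial.eval s0 (RatFunc.denom (S.WrD v)) ≠ 0) ∧
    (∃ v : Fin kk → Ff, (∀ j, v j ∈ K) ∧ ∃ s0 : ℂ, s0 ^ 2 = zz ∧
        RatFunc.eval (RingHom.id ℂ) s0 (S.WrD v) ≠ 0)) ∧
  (∀ kk : ℕ, 1 ≤ kk → kk ≤ S.R + 1 →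
    (∀ v : Fin kk → Ff, (∀ j, v j ∈ K) →
        Polynomial.eval 0 (RatFunc.denom (S.WrD v)) ≠ 0) ∧
    (∃ v : Fin kk → Ff, (∀ j, v j ∈ K) ∧
        RatFunc.eval (RingHom.id ℂ) 0 (S.WrD v) ≠ 0))

/-- The dual space K† = span{Wr†(v_1,…,v_R) : v_i ∈ K}. -/
def Kdag (S : TypeASetting) (K : Submodule ℂ Ff) : Submodule ℂ Ff :=
  Submodule.span ℂ {f | ∃ v : Fin S.R → Ff, (∀ j, v j ∈ K) ∧ f = S.WrD v}

/-- K is cyclotomically self-dual: u(x) ∈ K ⟺ u(−x) ∈ K†. -/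
def SelfDual (S : TypeASetting) (K : Submodule ℂ Ff) : Prop :=
  ∀ f : Ff, IsQP f → (f ∈ K ↔ negX f ∈ S.Kdag K)

/-- B is the canonical bilinear form: B(u,v) = Wr†(u, w_1,…,w_R) whenever
v(−x) = Wr†(w_1,…,w_R) with w_i ∈ K. -/
def IsB (S : TypeASetting) (K : Submodule ℂ Ff) (B : Ff → Ff → ℂ) : Prop :=
  ∀ u v : Ff, u ∈ K → v ∈ K → ∀ w : Fin S.R → Ff, (∀ j, w j ∈ K) → negX v = S.WrD w →
    algebraMap ℂ Ff (B u v) = S.WrD (Fin.cons u w)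

/-- A special basis of K: a decomposable basis with deg u_k = d_k. -/
def SpecialBasis (S : TypeASetting) (K : Submodule ℂ Ff) (u : Fin (S.R+1) → Ff) : Prop :=
  (∀ k, u k ∈ K) ∧ LinearIndependent ℂ u ∧ Submodule.span ℂ (Set.range u) = K ∧
  (∀ k, degXC (u k) = S.d k) ∧ ∀ k, IsEvenQP (u k) ∨ IsOddQP (u k)

/-- K_Sp = span(u_1,…,u_p, u_{R+2−p},…,u_{R+1}) (0-indexed). -/
def KSp (S : TypeASetting) (u : Fin (S.R+1) → Ff) : Submodule ℂ Ff :=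
  Submodule.span ℂ {f | ∃ k : Fin (S.R+1), ((k : ℕ) < S.p ∨ S.R + 1 - S.p ≤ (k : ℕ)) ∧ f = u k}

/-- K_O = span(u_{p+1},…,u_{R+1−p}) (0-indexed). -/
def KO (S : TypeASetting) (u : Fin (S.R+1) → Ff) : Submodule ℂ Ff :=
  Submodule.span ℂ {f | ∃ k : Fin (S.R+1), (S.p ≤ (k : ℕ) ∧ (k : ℕ) < S.R + 1 - S.p) ∧ f = u k}

end TypeASetting

/-- A full flag 0 = F_0 ⊂ F_1 ⊂ ⋯ ⊂ F_{R+1} = K. -/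
def IsFlag (R : ℕ) (K : Submodule ℂ Ff) (Fl : Fin (R+2) → Submodule ℂ Ff) : Prop :=
  Fl 0 = ⊥ ∧ Fl (Fin.last (R+1)) = K ∧ StrictMono Fl

/-- A basis adjusted to the flag Fl: F_k = span(u_1,…,u_k) for all k. -/
def AdjustedBasis (R : ℕ) (Fl : Fin (R+2) → Submodule ℂ Ff) (u : Fin (R+1) → Ff) : Prop :=
  ∀ k : Fin (R+2), Fl k = Submodule.span ℂ {f | ∃ j : Fin (R+1), (j : ℕ) < (k : ℕ) ∧ f = u j}

namespace TypeASetting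

/-- The tuple β(F): y_k = Wr†(u_1,…,u_k), k = 1,…,R (0-indexed). -/
def flagTuple (S : TypeASetting) (u : Fin (S.R+1) → Ff) (k : Fin S.R) : Ff :=
  S.WrD fun j : Fin ((k : ℕ) + 1) => u (Fin.castLE (Nat.succ_le_succ (le_of_lt k.isLt)) j)

end TypeASetting

/-- A tuple (y_1,…,y_R) of nonzero elements is cyclotomic if y_k(−x) ≃ y_{R+1−k}(x). -/
def CycTupleA (R : ℕ) (y : Fin R → Ff) : Prop :=
  (∀ k, y k ≠ 0) ∧ ∀ k, ∃ c : ℂ, c ≠ 0 ∧ negX (y k) = algebraMap ℂ Ff c * y (Fin.rev k)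

namespace TypeASetting

/-- The tuple β(F) (computed from any adjusted basis) is cyclotomic. -/
def BetaCyc (S : TypeASetting) (Fl : Fin (S.R+2) → Submodule ℂ Ff) : Prop :=
  ∀ u : Fin (S.R+1) → Ff, AdjustedBasis S.R Fl u → CycTupleA S.R (S.flagTuple u)

/-- The flag Fl is isotropic with respect to B: F_k = F_{R+1−k}^⊥ for k = 1,…,R. -/
def IsotropicFlag (S : TypeASetting) (K : Submodule ℂ Ff) (B : Ff → Ff → ℂ)
    (Fl : Fin (S.R+2) → Submodule ℂ Ff) : Prop :=
  ∀ k : Fin S.R,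
    (Fl ⟨(k : ℕ) + 1, by have := k.isLt; omega⟩ : Set Ff) =
      {v : Ff | v ∈ K ∧ ∀ u ∈ Fl ⟨S.R - (k : ℕ), by omega⟩, B u v = 0}

end TypeASetting

/-- Omission of the k-th entry from an (m+1)-tuple. -/
def omitTuple {m : ℕ} (r : Fin (m+1) → Ff) (k : Fin (m+1)) : Fin m → Ff :=
  fun j => r (k.succAbove j)

theorem Fin.exists_succAbove_perm_of_injective {n : ℕ} {v : Fin n → Fin (n + 1)}
    (hv : Function.Injective v) :
    ∃ (m : Fin (n + 1)) (σ : Equiv.Perm (Fin n)), v = fun t => m.succAbove (σ t) := by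
  obtain ⟨m, hm⟩ : ∃ m, m ∉ Set.range v := by
    by_contra! h
    simpa using Fintype.card_le_of_surjective v h
  choose u hu using fun t => Fin.exists_succAbove_eq fun h : v t = m => hm ⟨t, h⟩
  have hu_inj : Function.Injective u := fun a b hab => hv (by rw [← hu a, ← hu b, hab])
  exact ⟨m, Equiv.ofBijective u (Finite.injective_iff_bijective.mp hu_inj),
    funext fun t => (hu t).symm⟩

theorem Fin.val_add_val_rev_eq_iff {n : ℕ} (i k : Fin (n + 1)) :
    (i : ℕ) + (k.rev : ℕ) = n ↔ i = k := by
  rw [Fin.val_rev, Fin.ext_iff]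
  omega

section Minors

open Matrix

variable {k V E : Type*} [CommRing k] [AddCommGroup V] [Module k V] [AddCommGroup E] [Module k E]

theorem exists_eq_sum_smul_of_span_range_eq {ι κ : Type*} [Fintype ι] {r : ι → V}
    {W : Submodule k V} (hspan : Submodule.span k (Set.range r) = W) {v : κ → V}
    (hv : ∀ t, v t ∈ W) : ∃ N : κ → ι → k, v = fun t => ∑ m, N t m • r m := by
  choose N hN using fun t => (Submodule.mem_span_range_iff_exists_fun k).mp (hspan ▸ hv t)
  exact ⟨N, funext fun t => (hN t).symm⟩

def Matrix.maxMinor {n : ℕ} (N : Fin n → Fin (n + 1) → k) (m : Fin (n + 1)) : k :=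
  det (of fun t t' => N t (m.succAbove t'))

theorem AlternatingMap.ext_succAbove {n : ℕ} {F G : (Fin (n + 1) → k) [⋀^Fin n]→ₗ[k] E}
    (h : ∀ m : Fin (n + 1), F (fun t => Pi.single (m.succAbove t) 1) =
      G (fun t => Pi.single (m.succAbove t) 1)) : F = G := by
  refine (Pi.basisFun k (Fin (n + 1))).ext_alternating fun v hv => ?_
  obtain ⟨m, σ, rfl⟩ := Fin.exists_succAbove_perm_of_injective hv
  have hperm := fun H : (Fin (n + 1) → k) [⋀^Fin n]→ₗ[k] E =>
    H.map_perm (fun t => Pi.single (m.succAbove t) (1 : k)) σ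
  simp only [Pi.basisFun_apply]
  exact (hperm F).trans ((congrArg _ (h m)).trans (hperm G).symm)

theorem AlternatingMap.map_sum_smul_eq_det_smul {n : ℕ} (F : V [⋀^Fin n]→ₗ[k] E)
    (M : Matrix (Fin n) (Fin n) k) (r : Fin n → V) :
    F (fun t => ∑ m, M t m • r m) = M.det • F r := by
  have key : F.compLinearMap (Fintype.linearCombination k r) =
      (detRowAlternating : (Fin n → k) [⋀^Fin n]→ₗ[k] k).smulRight (F r) := by
    refine (Pi.basisFun k (Fin n)).ext_alternating fun v hv => ?_
    let σ : Equiv.Perm (Fin n) := Equiv.ofBijective v (Finite.injective_iff_bijective.mp hv)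
    have hσ : (fun i => Pi.basisFun k (Fin n) (v i)) = (fun i => Pi.single i 1) ∘ σ := by
      ext; simp [σ]
    rw [hσ, AlternatingMap.map_perm, AlternatingMap.map_perm]
    have hdet := (Pi.basisFun k (Fin n)).det_self
    rw [Pi.basisFun_det, show ⇑(Pi.basisFun k (Fin n)) = fun i => Pi.single i 1 from
      funext (Pi.basisFun_apply k (Fin n))] at hdet
    simp [hdet, Fintype.linearCombination_apply, Pi.single_apply]
  exact DFunLike.congr_fun key fun t => M t

theorem Matrix.maxMinor_pi_single_succAbove {n : ℕ} (m m' : Fin (n + 1)) :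
    maxMinor (fun t => (Pi.single (m.succAbove t) 1 : Fin (n + 1) → k)) m' =
      if m = m' then 1 else 0 := by
  unfold maxMinor
  split_ifs with h
  · subst h
    convert det_one (n := Fin n) (R := k) using 2
    ext t t'
    simp [Pi.single_apply, one_apply, eq_comm]
  · obtain ⟨t₀, ht₀⟩ := Fin.exists_succAbove_eq h
    refine det_eq_zero_of_column_eq_zero t₀ fun t => ?_
    simp [ht₀, Pi.single_apply]

theorem AlternatingMap.map_sum_smul_eq_sum_maxMinor_smul {n : ℕ} (F : V [⋀^Fin n]→ₗ[k] E)
    (N : Fin n → Fin (n + 1) → k) (r : Fin (n + 1) → V) :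
    F (fun t => ∑ m, N t m • r m) = ∑ m, maxMinor N m • F (fun t => r (m.succAbove t)) := by
  have key : F.compLinearMap (Fintype.linearCombination k r) =
      (Fintype.linearCombination k fun m => F fun t => r (m.succAbove t)).compAlternatingMap
        (AlternatingMap.pi fun m : Fin (n + 1) =>
          (detRowAlternating : (Fin n → k) [⋀^Fin n]→ₗ[k] k).compLinearMap
            (LinearMap.funLeft k k m.succAbove)) := by
    refine AlternatingMap.ext_succAbove fun m => ?_
    have hminor : ∀ m' : Fin (n + 1), detRowAlternating (fun t =>
        LinearMap.funLeft k k m'.succAbove (Pi.single (m.succAbove t) 1)) =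
          if m = m' then (1 : k) else 0 :=
      maxMinor_pi_single_succAbove m
    simp [Fintype.linearCombination_apply, hminor, Pi.single_apply]
  exact DFunLike.congr_fun key N

theorem Matrix.det_cons_single {n : ℕ} (N : Fin n → Fin (n + 1) → k) (i : Fin (n + 1)) :
    det (of (Fin.cons (Pi.single i 1) N)) = (-1) ^ (i : ℕ) * maxMinor N i := by
  rw [det_succ_row_zero, Finset.sum_eq_single i (fun j _ hj => by simp [hj]) (by simp)]
  simp [maxMinor, submatrix]

variable {𝕜 : Type*} [Field 𝕜]

theorem Module.Dual.exists_smul_eq_of_ker_le {W : Type*} [AddCommGroup W] [Module 𝕜 W]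
    {φ ψ : Module.Dual 𝕜 W} (h : LinearMap.ker φ ≤ LinearMap.ker ψ) : ∃ c : 𝕜, c • φ = ψ :=
  Submodule.mem_span_singleton.mp <| by
    simpa using mem_span_of_iInf_ker_le_ker (L := fun _ : Unit => φ) (by simpa using h)

/-- Bordering a basis of `ker φ` by a new first row gives a determinant proportional to `φ`. -/
theorem Matrix.exists_det_cons_eq_smul {n : ℕ} {φ : Module.Dual 𝕜 (Fin (n + 1) → 𝕜)}
    (hφ : φ ≠ 0) : ∃ (N : Fin n → Fin (n + 1) → 𝕜) (c : 𝕜), c ≠ 0 ∧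
      ∀ y, det (of (Fin.cons y N)) = c * φ y := by
  have hker : Module.finrank 𝕜 (LinearMap.ker φ) = n := by
    have := Module.Dual.finrank_ker_add_one_of_ne_zero hφ
    rw [Module.finrank_fin_fun] at this
    omega
  obtain ⟨b⟩ : Nonempty (Module.Basis (Fin n) 𝕜 (LinearMap.ker φ)) :=
    ⟨Module.finBasisOfFinrankEq 𝕜 _ hker⟩
  let N : Fin n → Fin (n + 1) → 𝕜 := (LinearMap.ker φ).subtype ∘ b
  have hcons_indep : ∀ y, LinearIndependent 𝕜 (Fin.cons y N : Fin (n + 1) → _) ↔ φ y ≠ 0 := by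
    intro y
    rw [linearIndependent_finCons, Set.range_comp, Submodule.span_image, b.span_eq,
      Submodule.map_subtype_top]
    exact and_iff_right (b.linearIndependent.map' _ (LinearMap.ker φ).ker_subtype)
  let D : Module.Dual 𝕜 (Fin (n + 1) → 𝕜) :=
    (detRowAlternating : (Fin (n + 1) → 𝕜) [⋀^Fin (n + 1)]→ₗ[𝕜] 𝕜).toMultilinearMap.toLinearMap
      (Fin.cons 0 N) 0
  have hD : ∀ y, D y = det (of (Fin.cons y N)) := fun y => by
    simp only [D, MultilinearMap.toLinearMap_apply, Fin.update_cons_zero,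
      AlternatingMap.coe_multilinearMap]
    rfl
  obtain ⟨c, hc⟩ := Module.Dual.exists_smul_eq_of_ker_le (φ := φ) (ψ := D) fun y hy => by
    rw [LinearMap.mem_ker, hD]
    exact AlternatingMap.map_linearDependent _ _ ((hcons_indep y).not.mpr (not_not.mpr hy))
  refine ⟨N, c, ?_, fun y => by rw [← hD, ← hc, LinearMap.smul_apply, smul_eq_mul]⟩
  rintro rfl
  obtain ⟨x₀, hx₀⟩ : ∃ x₀, φ x₀ ≠ 0 := by
    by_contra! h
    exact hφ (LinearMap.ext h)
  have hdet : IsUnit (of (Fin.cons x₀ N)).det := (isUnit_iff_isUnit_det _).mp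
    (linearIndependent_rows_iff_isUnit.mp ((hcons_indep x₀).mpr hx₀))
  rw [← hD, ← hc, zero_smul] at hdet
  exact not_isUnit_zero hdet

theorem Matrix.exists_det_cons_eq {n : ℕ} (hn : 0 < n) {φ : Module.Dual 𝕜 (Fin (n + 1) → 𝕜)}
    (hφ : φ ≠ 0) : ∃ N : Fin n → Fin (n + 1) → 𝕜, ∀ y, det (of (Fin.cons y N)) = φ y := by
  obtain ⟨N, c, hc, hN⟩ := exists_det_cons_eq_smul hφ
  let t₀ : Fin n := ⟨0, hn⟩
  refine ⟨Function.update N t₀ (c⁻¹ • N t₀), fun y => ?_⟩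
  have hupd := (detRowAlternating : (Fin (n + 1) → 𝕜) [⋀^Fin (n + 1)]→ₗ[𝕜] 𝕜).map_update_smul
    (Fin.cons y N) t₀.succ c⁻¹ (N t₀)
  have hself : Function.update (Fin.cons y N : Fin (n + 1) → _) t₀.succ (N t₀) = Fin.cons y N := by
    rw [← Fin.cons_update, Function.update_eq_self]
  rw [hself] at hupd
  rw [Fin.cons_update]
  refine hupd.trans ?_
  rw [smul_eq_mul, show detRowAlternating (Fin.cons y N) = c * φ y from hN y,
    inv_mul_cancel_left₀ hc]

theorem Matrix.exists_maxMinor_eq {n : ℕ} (hn : 0 < n) (a : Fin (n + 1) → 𝕜) :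
    ∃ N : Fin n → Fin (n + 1) → 𝕜, ∀ m, maxMinor N m = a m := by
  classical
  by_cases ha : a = 0
  · have : Nonempty (Fin n) := ⟨⟨0, hn⟩⟩
    exact ⟨0, fun m => by rw [ha]; exact det_zero⟩
  let φ : Module.Dual 𝕜 (Fin (n + 1) → 𝕜) :=
    Fintype.linearCombination 𝕜 fun j => (-1) ^ (j : ℕ) * a j
  have hφ : ∀ m, φ (Pi.single m 1) = (-1) ^ (m : ℕ) * a m := fun m => by
    simp [φ, Fintype.linearCombination_apply_single]
  have hφ₀ : φ ≠ 0 := fun h => ha (funext fun m => by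
    simpa [h] using (hφ m).symm)
  obtain ⟨N, hN⟩ := exists_det_cons_eq hn hφ₀
  refine ⟨N, fun m => mul_left_cancel₀ (pow_ne_zero (m : ℕ) (neg_ne_zero.mpr one_ne_zero)) ?_⟩
  rw [← det_cons_single, hN, hφ]

end Minors

theorem dS_eq_of_eq_div {f : Ff} {a b : ℂ[X]} (hb : b ≠ 0)
    (hf : f = algebraMap ℂ[X] Ff a / algebraMap ℂ[X] Ff b) :
    dS f = (algebraMap ℂ[X] Ff (derivative a) * algebraMap ℂ[X] Ff b -
      algebraMap ℂ[X] Ff a * algebraMap ℂ[X] Ff (derivative b)) / algebraMap ℂ[X] Ff b ^ 2 := by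
  have hden : algebraMap ℂ[X] Ff f.denom ≠ 0 := RatFunc.algebraMap_ne_zero f.denom_ne_zero
  have hb' : algebraMap ℂ[X] Ff b ≠ 0 := RatFunc.algebraMap_ne_zero hb
  have hcross : f.num * b = a * f.denom := by
    have h := (RatFunc.num_div_denom f).trans hf
    rw [div_eq_div_iff hden hb', ← map_mul, ← map_mul] at h
    exact RatFunc.algebraMap_injective ℂ h
  have hder := congrArg derivative hcross
  simp only [derivative_mul] at hder
  rw [dS, div_eq_div_iff (pow_ne_zero 2 hden) (pow_ne_zero 2 hb')]
  simp only [← map_pow, ← map_mul, ← map_sub]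
  refine congrArg _ ?_
  linear_combination (f.denom * b) * hder -
    (derivative f.denom * b + f.denom * derivative b) * hcross

theorem dS_add (f g : Ff) : dS (f + g) = dS f + dS g := by
  have hf := RatFunc.algebraMap_ne_zero f.denom_ne_zero
  have hg := RatFunc.algebraMap_ne_zero g.denom_ne_zero
  have hfg : f + g = algebraMap ℂ[X] Ff (f.num * g.denom + g.num * f.denom) /
      algebraMap ℂ[X] Ff (f.denom * g.denom) := by
    conv_lhs => rw [← RatFunc.num_div_denom f, ← RatFunc.num_div_denom g]
    rw [div_add_div _ _ hf hg]
    simp only [map_add, map_mul]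
    ring
  rw [dS_eq_of_eq_div (mul_ne_zero f.denom_ne_zero g.denom_ne_zero) hfg,
    dS_eq_of_eq_div f.denom_ne_zero (RatFunc.num_div_denom f).symm,
    dS_eq_of_eq_div g.denom_ne_zero (RatFunc.num_div_denom g).symm]
  simp only [derivative_mul, map_add, map_mul]
  field_simp
  ring

theorem dS_smul (c : ℂ) (f : Ff) : dS (c • f) = c • dS f := by
  have hsmul : ∀ h : Ff, c • h = algebraMap ℂ[X] Ff (C c) * h := fun h => by
    rw [Algebra.smul_def, IsScalarTower.algebraMap_apply ℂ ℂ[X] Ff, Polynomial.algebraMap_eq]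
  have hcf : c • f = algebraMap ℂ[X] Ff (C c * f.num) / algebraMap ℂ[X] Ff f.denom := by
    rw [hsmul, map_mul, mul_div_assoc, RatFunc.num_div_denom]
  rw [dS_eq_of_eq_div f.denom_ne_zero hcf,
    dS_eq_of_eq_div f.denom_ne_zero (RatFunc.num_div_denom f).symm, hsmul]
  simp only [derivative_mul, derivative_C, zero_mul, zero_add, map_mul]
  ring

def dXₗ : Module.End ℂ Ff where
  toFun := dX
  map_add' f g := by simp only [dX, dS_add, mul_add]
  map_smul' c f := by simp only [dX, dS_smul, mul_smul_comm, RingHom.id_apply]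

def wronskianRow (k : ℕ) : Ff →ₗ[ℂ] (Fin k → Ff) :=
  LinearMap.pi fun j : Fin k => dXₗ ^ (j : ℕ)

theorem wronskianRow_apply (k : ℕ) (u : Ff) (j : Fin k) : wronskianRow k u j = dX^[j] u := by
  simp only [wronskianRow, LinearMap.pi_apply, Module.End.pow_apply]
  rfl

def wronskianAlt (k : ℕ) : Ff [⋀^Fin k]→ₗ[ℂ] Ff where
  toMultilinearMap :=
    ((Matrix.detRowAlternating : (Fin k → Ff) [⋀^Fin k]→ₗ[Ff] Ff).toMultilinearMap.restrictScalars
      ℂ).compLinearMap fun _ => wronskianRow k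
  map_eq_zero_of_eq' u i j h hij :=
    Matrix.detRowAlternating.map_eq_zero_of_eq _ (by simp [h]) hij

theorem wronskianAlt_apply {k : ℕ} (u : Fin k → Ff) : wronskianAlt k u = Wr u := by
  simp only [Wr, ← wronskianRow_apply]
  rfl

theorem negX_ne_zero {f : Ff} (hf : f ≠ 0) : negX f ≠ 0 := by
  have hcomp : ∀ p : ℂ[X], p ≠ 0 → p.comp (C Complex.I * X) ≠ 0 := fun p hp =>
    (comp_C_mul_X_eq_zero_iff (mem_nonZeroDivisors_of_ne_zero Complex.I_ne_zero)).not.mpr hp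
  exact div_ne_zero (RatFunc.algebraMap_ne_zero (hcomp _ (RatFunc.num_ne_zero hf)))
    (RatFunc.algebraMap_ne_zero (hcomp _ f.denom_ne_zero))

namespace TypeASetting

def wrDAlt (S : TypeASetting) (k : ℕ) : Ff [⋀^Fin k]→ₗ[ℂ] Ff :=
  (LinearMap.mulRight ℂ (∏ j ∈ Finset.range (k - 1), S.T j ^ (k - 1 - j))⁻¹).compAlternatingMap
    (wronskianAlt k)

theorem wrDAlt_apply (S : TypeASetting) {k : ℕ} (u : Fin k → Ff) : S.wrDAlt k u = S.WrD u := by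
  simp [wrDAlt, WrD, wronskianAlt_apply, div_eq_mul_inv]

variable (S : TypeASetting)

theorem WrD_sum_smul_eq_det_smul {k : ℕ} (M : Matrix (Fin k) (Fin k) ℂ) (r : Fin k → Ff) :
    S.WrD (fun t => ∑ m, M t m • r m) = M.det • S.WrD r := by
  simp only [← wrDAlt_apply, AlternatingMap.map_sum_smul_eq_det_smul]

theorem WrD_sum_smul_eq_sum_maxMinor_smul {k : ℕ} (N : Fin k → Fin (k + 1) → ℂ)
    (r : Fin (k + 1) → Ff) :
    S.WrD (fun t => ∑ m, N t m • r m) = ∑ m, Matrix.maxMinor N m • S.WrD (omitTuple r m) := by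
  simp only [← wrDAlt_apply, AlternatingMap.map_sum_smul_eq_sum_maxMinor_smul]
  rfl

variable {S} {K : Submodule ℂ Ff} {B : Ff → Ff → ℂ} {r : Fin (S.R + 1) → Ff}

theorem Kdag_le_span_WrD_omitTuple (hspan : Submodule.span ℂ (Set.range r) = K) :
    S.Kdag K ≤ Submodule.span ℂ (Set.range fun m => S.WrD (omitTuple r m)) := by
  refine Submodule.span_le.mpr ?_
  rintro _ ⟨v, hv, rfl⟩
  obtain ⟨N, rfl⟩ := exists_eq_sum_smul_of_span_range_eq hspan hv
  rw [WrD_sum_smul_eq_sum_maxMinor_smul]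
  exact Submodule.sum_mem _ fun m _ => Submodule.smul_mem _ _ (Submodule.subset_span ⟨m, rfl⟩)

theorem WrD_ne_zero_of_hasFrame (hfr : S.HasFrame K)
    (hspan : Submodule.span ℂ (Set.range r) = K) : S.WrD r ≠ 0 := by
  obtain ⟨v, hv, hv₀⟩ := (hfr.2.2.2 (S.R + 1) (by omega) le_rfl).2
  obtain ⟨N, rfl⟩ := exists_eq_sum_smul_of_span_range_eq hspan hv
  intro hr
  rw [show (fun t => ∑ m, N t m • r m) = fun t => ∑ m, Matrix.of N t m • r m from rfl,
    WrD_sum_smul_eq_det_smul, hr, smul_zero] at hv₀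
  exact hv₀ (RatFunc.eval_zero _ _)

theorem IsB.algebraMap_apply_eq_maxMinor_smul (hB : S.IsB K B) (hmem : ∀ k, r k ∈ K)
    (N : Fin S.R → Fin (S.R + 1) → ℂ) {v : Ff} (hv : v ∈ K)
    (hw : negX v = S.WrD fun t => ∑ m, N t m • r m) (i : Fin (S.R + 1)) :
    algebraMap ℂ Ff (B (r i) v) = ((-1) ^ (i : ℕ) * Matrix.maxMinor N i) • S.WrD r := by
  rw [hB (r i) v (hmem i) hv _ (fun t => Submodule.sum_mem _ fun m _ =>
    Submodule.smul_mem _ _ (hmem m)) hw, ← Matrix.det_cons_single, ← WrD_sum_smul_eq_det_smul]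
  congr 1
  ext t
  refine Fin.cases ?_ (fun t => rfl) t
  simp [Pi.single_apply]

theorem IsB.apply_eq_zero_of_WrD_omitTuple (hB : S.IsB K B) (hmem : ∀ k, r k ∈ K)
    {i k : Fin (S.R + 1)} (hik : i ≠ k) {v : Ff} (hv : v ∈ K) {c : ℂ} (hc : c ≠ 0)
    (hw : S.WrD (omitTuple r k) = algebraMap ℂ Ff c * negX v) : B (r i) v = 0 := by
  obtain ⟨t, rfl⟩ := Fin.exists_succAbove_eq hik
  let w := Function.update (omitTuple r k) t (c⁻¹ • r (k.succAbove t))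
  have hupd : Function.update (omitTuple r k) t (r (k.succAbove t)) = omitTuple r k :=
    Function.update_eq_self t (omitTuple r k)
  have hwK : ∀ s, w s ∈ K := by
    intro s
    rcases eq_or_ne s t with rfl | hs
    · simpa [w] using Submodule.smul_mem _ _ (hmem _)
    · simpa [w, hs, omitTuple] using hmem _
  have hwD : negX v = S.WrD w := by
    rw [← wrDAlt_apply, AlternatingMap.map_update_smul, hupd, wrDAlt_apply, hw,
      ← Algebra.smul_def, smul_smul, inv_mul_cancel₀ hc, one_smul]
  apply (algebraMap ℂ Ff).injective
  rw [hB _ v (hmem _) hv w hwK hwD, map_zero, ← wrDAlt_apply, Fin.cons_update,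
    AlternatingMap.map_update_smul, ← Fin.cons_update, hupd]
  exact smul_eq_zero_of_right _ (AlternatingMap.map_eq_zero_of_eq _ _ (i := 0) (j := t.succ)
    rfl (Fin.succ_ne_zero t).symm)

theorem SelfDual.exists_negX_eq_WrD (hsd : S.SelfDual K)
    (hspan : Submodule.span ℂ (Set.range r) = K) {u : Ff} (hqp : IsQP u) (hu : u ∈ K) :
    ∃ N : Fin S.R → Fin (S.R + 1) → ℂ, negX u = S.WrD fun t => ∑ m, N t m • r m := by
  obtain ⟨a, ha⟩ := (Submodule.mem_span_range_iff_exists_fun ℂ).mp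
    (Kdag_le_span_WrD_omitTuple hspan ((hsd u hqp).mp hu))
  obtain ⟨N, hN⟩ := Matrix.exists_maxMinor_eq (by have := S.hR1; omega) a
  exact ⟨N, by simp only [WrD_sum_smul_eq_sum_maxMinor_smul, hN, ha]⟩

end TypeASetting

theorem statement6_general (S : TypeASetting) (K : Submodule ℂ Ff)
    (hfr : S.HasFrame K)
    (hsd : S.SelfDual K) (B : Ff → Ff → ℂ) (hB : S.IsB K B)
    (r : Fin (S.R+1) → Ff)
    (hmem : ∀ k, r k ∈ K) (hind : LinearIndependent ℂ r)
    (hspan : Submodule.span ℂ (Set.range r) = K) :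
    (∀ k : Fin (S.R+1), ∃ c : ℂ, c ≠ 0 ∧
        S.WrD (omitTuple r k) = algebraMap ℂ Ff c * negX (r (Fin.rev k))) ↔
    (∀ i j : Fin (S.R+1), (i : ℕ) + (j : ℕ) ≠ S.R → B (r i) (r j) = 0) := by
  constructor
  · intro hWitt i j hij
    obtain ⟨c, hc, hw⟩ := hWitt j.rev
    rw [Fin.rev_rev] at hw
    refine hB.apply_eq_zero_of_WrD_omitTuple hmem ?_ (hmem j) hc hw
    exact mt (Fin.val_add_val_rev_eq_iff i j.rev).mpr (by simpa using hij)
  · intro hB₀ k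
    obtain ⟨N, hN⟩ := hsd.exists_negX_eq_WrD hspan (hfr.1 _ (hmem k.rev)) (hmem k.rev)
    have hvanish : ∀ i, i ≠ k → Matrix.maxMinor N i = 0 := fun i hik => by
      have h := hB.algebraMap_apply_eq_maxMinor_smul hmem N (hmem _) hN i
      rw [hB₀ i k.rev (mt (Fin.val_add_val_rev_eq_iff i k).mp hik), map_zero, eq_comm,
        smul_eq_zero] at h
      simpa [TypeASetting.WrD_ne_zero_of_hasFrame hfr hspan] using h
    rw [S.WrD_sum_smul_eq_sum_maxMinor_smul, Finset.sum_eq_single k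
      (fun i _ hik => by rw [hvanish i hik, zero_smul]) (by simp)] at hN
    have hk : Matrix.maxMinor N k ≠ 0 := fun h =>
      negX_ne_zero (hind.ne_zero k.rev) (by rw [hN, h, zero_smul])
    refine ⟨(Matrix.maxMinor N k)⁻¹, inv_ne_zero hk, ?_⟩
    rw [hN, ← Algebra.smul_def, smul_smul, inv_mul_cancel₀ hk, one_smul]

/-- Lemma 6.27: for cyclotomically self-dual K with canonical bilinear form
B, a basis (r_k) of K is a Witt basis iff B(r_i, r_j) = 0 whenever i + j ≠ R + 2
(paper's 1-based indexing; here (i:ℕ) + (j:ℕ) ≠ R in 0-based indexing). -/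
theorem statement6 (S : TypeASetting) (K : Submodule ℂ Ff)
    (hdec : Decomposable K) (hfr : S.HasFrame K)
    (hsd : S.SelfDual K) (B : Ff → Ff → ℂ) (hB : S.IsB K B)
    (r : Fin (S.R+1) → Ff)
    (hmem : ∀ k, r k ∈ K) (hind : LinearIndependent ℂ r)
    (hspan : Submodule.span ℂ (Set.range r) = K) :
    (∀ k : Fin (S.R+1), ∃ c : ℂ, c ≠ 0 ∧
        S.WrD (omitTuple r k) = algebraMap ℂ Ff c * negX (r (Fin.rev k))) ↔
    (∀ i j : Fin (S.R+1), (i : ℕ) + (j : ℕ) ≠ S.R → B (r i) (r j) = 0) :=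
  statement6_general S K hfr hsd B hB r hmem hind hspan
end
end

section
/- Assume every t_j is nonzero. Then (t, c) is a cyclotomic point if and only if for every j ∈ I there exists a nonzero constant λ_j ∈ ℂ with y_{σ(j)}(ωx) = λ_j · y_j(x) as polynomials. Moreover, since each y_i is monic, in that case necessarily λ_j = ω^{deg y_j}; that is, (t, c) is a cyclotomic point if and only if y_{σ(j)}(ωx) = ω^{deg y_j} · y_j(x) for all j ∈ I. -/
/-!
Let `P` be the multiset of pairs `(t_l, c(l))` and `φ (z, i) = (ω z, σ i)`, so that `φ^M = id`.
A cyclotomic point is exactly a `P` that is a sum of orbits `{p, φ p, …, φ^(M-1) p}`. Since every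
`t_l` is nonzero and `ω` is a primitive `M`-th root of unity, every point of `P` has exact
`φ`-period `M`, and then being such a sum is equivalent to `φ`-invariance of `P`: one peels off
one orbit at a time. Colour by colour, invariance says that the roots of `y_{σ j}` are `ω` times
those of `y_j`. For monic split polynomials this is the identity `y_{σ j}(ω x) = λ y_j(x)`, and
comparing leading coefficients forces `λ = ω ^ deg y_j`.
-/

open Polynomial

noncomputable section

private lemma idx_lt {m M i k : ℕ} (hi : i < m) (hk : k < M) : i + m * k < M * m := by
  have h1 : i + m * k + 1 ≤ m + m * k := by omega
  have h2 : m + m * k = m * (k + 1) := by ring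
  have h3 : m * (k + 1) ≤ m * M := Nat.mul_le_mul_left m hk
  have h4 : m * M = M * m := Nat.mul_comm m M
  omega

private lemma idx_lt' {m M i : ℕ} (hi : i < m) (hM : 1 ≤ M) : i < M * m := by
  have h3 : m * 1 ≤ m * M := Nat.mul_le_mul_left m hM
  have h4 : m * M = M * m := Nat.mul_comm m M
  omega

/-- The monic polynomial y_i(x) = ∏_{j : c(j) = i} (x − t_j). -/
def yPoly {I : Type} [DecidableEq I] {m' : ℕ} (t : Fin m' → ℂ) (c : Fin m' → I) (i : I) :
    Polynomial ℂ :=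
  ∏ j ∈ Finset.univ.filter (fun j => c j = i), (X - C (t j))

/-- The pair (t, c) is a cyclotomic point: m' = M·m and, after a permutation,
t_{i+mk} = ω^k t_i and c(i+mk) = σ^k(c(i)). -/
def IsCycPoint {I : Type} (σ : Equiv.Perm I) (M : ℕ) (ω : ℂ) {m' : ℕ}
    (t : Fin m' → ℂ) (c : Fin m' → I) : Prop :=
  ∃ m : ℕ, ∃ hm : m' = M * m, ∃ ρ : Equiv.Perm (Fin m'),
    ∀ i : ℕ, ∀ hi : i < m, ∀ k : ℕ, ∀ hk : k < M,
      t (ρ ⟨i + m * k, by rw [hm]; exact idx_lt hi hk⟩) =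
          ω ^ k * t (ρ ⟨i, by rw [hm]; exact idx_lt' hi (by omega)⟩) ∧
      c (ρ ⟨i + m * k, by rw [hm]; exact idx_lt hi hk⟩) =
          (σ ^ k) (c (ρ ⟨i, by rw [hm]; exact idx_lt' hi (by omega)⟩))

open Function

theorem Multiset.map_univ_val_eq_sum {ι α : Type*} [Fintype ι] (g : ι → α) :
    Finset.univ.val.map g = ∑ i, {g i} := by
  rw [← Multiset.sum_map_singleton (Finset.univ.val.map g), Multiset.map_map,
    Finset.sum_eq_multiset_sum]
  rfl

theorem Multiset.exists_equiv_comp_eq_of_map_univ_eq {ι κ α : Type*} [Fintype ι] [Fintype κ]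
    {F : ι → α} {G : κ → α} (h : Finset.univ.val.map F = Finset.univ.val.map G) :
    ∃ e : κ ≃ ι, F ∘ e = G := by
  classical
  have hcard : ∀ a, Fintype.card {x // G x = a} = Fintype.card {x // F x = a} := fun a => by
    have := congrArg (Multiset.count a) h
    simp only [Multiset.count_map, Fintype.card_subtype] at this ⊢
    simp only [Finset.card, Finset.filter_val, eq_comm (a := a)] at this ⊢
    exact this.symm
  exact ⟨Equiv.ofFiberEquiv fun a => Fintype.equivOfCardEq (hcard a),
    funext (Equiv.ofFiberEquiv_map _)⟩

section IterOrbit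

variable {α : Type*} (f : α → α)

def iterOrbit (n : ℕ) (x : α) : Multiset α :=
  Finset.univ.val.map fun k : Fin n => f^[k] x

variable {f}

theorem Multiset.map_iterate_eq_self {P : Multiset α} (hP : P.map f = P) (k : ℕ) :
    P.map f^[k] = P := by
  induction k with
  | zero => simp
  | succ k ih => rw [iterate_succ, ← Multiset.map_map, hP, ih]

theorem map_iterOrbit {n : ℕ} {x : α} (hx : IsPeriodicPt f n x) :
    (iterOrbit f n x).map f = iterOrbit f n x := by
  cases n with
  | zero => rfl
  | succ N =>
    rw [iterOrbit, Multiset.map_map, Multiset.map_univ_val_eq_sum, Multiset.map_univ_val_eq_sum,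
      Fin.sum_univ_castSucc, Fin.sum_univ_succ, add_comm]
    congr 1
    · simp only [comp_apply, Fin.val_last, ← iterate_succ_apply' f N, hx.eq, Fin.val_zero,
        iterate_zero, id]
    · simp [Fin.val_succ, iterate_succ_apply']

theorem nodup_iterOrbit {x : α} : (iterOrbit f (minimalPeriod f x) x).Nodup :=
  Multiset.Nodup.map_on (fun a _ b _ hab => Fin.ext (iterate_injOn_Iio_minimalPeriod a.2 b.2 hab))
    Finset.univ.nodup

theorem iterOrbit_subset {P : Multiset α} (hP : P.map f = P) {x : α} (hx : x ∈ P) (n : ℕ) :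
    iterOrbit f n x ⊆ P := by
  intro y hy
  obtain ⟨k, -, rfl⟩ := Multiset.mem_map.1 hy
  rw [← Multiset.map_iterate_eq_self hP k]
  exact Multiset.mem_map_of_mem _ hx

theorem map_sum_iterOrbit {n : ℕ} (hf : f^[n] = id) {m : ℕ} (q : Fin m → α) :
    (∑ i, iterOrbit f n (q i)).map f = ∑ i, iterOrbit f n (q i) := by
  rw [← Multiset.coe_mapAddMonoidHom, map_sum]
  exact Finset.sum_congr rfl fun i _ => map_iterOrbit (congrFun hf (q i))

theorem exists_eq_sum_iterOrbit {n : ℕ} (hn : 0 < n) (P : Multiset α) (hP : P.map f = P)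
    (hper : ∀ x ∈ P, minimalPeriod f x = n) :
    ∃ m, ∃ q : Fin m → α, P = ∑ i, iterOrbit f n (q i) := by
  classical
  induction h : P.card using Nat.strong_induction_on generalizing P with
  | _ N ih =>
  rcases Multiset.empty_or_exists_mem P with rfl | ⟨x, hx⟩
  · exact ⟨0, Fin.elim0, by simp⟩
  set O := iterOrbit f n x
  have hOP : O ≤ P := by
    have hnodup : O.Nodup := by simpa only [O, hper x hx] using nodup_iterOrbit (f := f) (x := x)
    rw [Multiset.le_iff_subset hnodup]
    exact iterOrbit_subset hP hx n
  have hsplit : P = O + (P - O) := (add_tsub_cancel_of_le hOP).symm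
  have hrest : (P - O).map f = P - O := by
    have hO : O.map f = O := map_iterOrbit (hper x hx ▸ isPeriodicPt_minimalPeriod f x)
    have := hP
    rw [hsplit, Multiset.map_add, hO] at this
    exact add_left_cancel this
  have hcard : (P - O).card < N := by
    have : O.card = n := by simp [O, iterOrbit]
    have := congrArg Multiset.card hsplit
    rw [Multiset.card_add] at this
    omega
  obtain ⟨m, q, hq⟩ := ih _ hcard (P - O) hrest
    (fun y hy => hper y (Multiset.mem_of_le (Multiset.sub_le_self _ _) hy)) rfl
  exact ⟨m + 1, Fin.cons x q, by rw [Fin.sum_univ_succ]; simpa [← hq] using hsplit⟩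

theorem sum_iterOrbit_eq_map_univ (n : ℕ) {m : ℕ} (q : Fin m → α) :
    ∑ i, iterOrbit f n (q i) = Finset.univ.val.map fun x : Fin n × Fin m => f^[x.1] (q x.2) := by
  simp only [iterOrbit, Multiset.map_univ_val_eq_sum, Fintype.sum_prod_type]
  exact Finset.sum_comm

end IterOrbit

namespace Multiset

variable {α β : Type*} [DecidableEq β]

def fstFiber (P : Multiset (α × β)) (b : β) : Multiset α :=
  (P.filter (·.2 = b)).map Prod.fst

theorem ext_fstFiber {P Q : Multiset (α × β)} (h : ∀ b, P.fstFiber b = Q.fstFiber b) : P = Q := by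
  classical
  have hfilter : ∀ (R : Multiset (α × β)) b, R.filter (·.2 = b) = (R.fstFiber b).map (·, b) := by
    intro R b
    rw [fstFiber, map_map]
    conv_lhs => rw [← map_id (R.filter _)]
    exact map_congr rfl fun p hp => by rw [← (mem_filter.1 hp).2]; rfl
  ext ⟨a, b⟩
  rw [← count_filter_of_pos (p := (·.2 = b)) rfl,
    ← count_filter_of_pos (s := Q) (p := (·.2 = b)) rfl, hfilter, hfilter, h]

theorem fstFiber_map_prodMap (P : Multiset (α × β)) (f : α → α) (σ : Equiv.Perm β) (b : β) :
    (P.map (Prod.map f σ)).fstFiber (σ b) = (P.fstFiber b).map f := by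
  simp only [fstFiber, filter_map, map_map]
  rw [filter_congr fun p _ => show σ p.2 = σ b ↔ p.2 = b from σ.injective.eq_iff]
  rfl

theorem map_prodMap_eq_self_iff (P : Multiset (α × β)) (f : α → α) (σ : Equiv.Perm β) :
    P.map (Prod.map f σ) = P ↔ ∀ b, P.fstFiber (σ b) = (P.fstFiber b).map f := by
  refine ⟨fun h b => by rw [← fstFiber_map_prodMap, h], fun h => ext_fstFiber fun b => ?_⟩
  obtain ⟨b, rfl⟩ := σ.surjective b
  rw [fstFiber_map_prodMap, h]

end Multiset

section ScaledRoots

variable {K : Type*} [Field K] {ω : K}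

theorem prod_X_sub_C_comp_C_mul_X (hω : ω ≠ 0) (s : Multiset K) :
    (s.map (X - C ·)).prod.comp (C ω * X) =
      C (ω ^ Multiset.card s) * ((s.map (ω⁻¹ * ·)).map (X - C ·)).prod := by
  rw [multiset_prod_comp, Multiset.map_map, Multiset.map_map]
  have hfac : ∀ a, (X - C a).comp (C ω * X) = C ω * (X - C (ω⁻¹ * a)) := fun a => by
    rw [sub_comp, X_comp, C_comp, mul_sub, ← C_mul, mul_inv_cancel_left₀ hω]
  simp only [comp_def, hfac, Multiset.prod_map_mul, Multiset.map_const',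
    Multiset.prod_replicate, ← C_pow]

theorem eq_map_mul_of_prod_X_sub_C_comp_eq (hω : ω ≠ 0) {s s' : Multiset K} {lam : K}
    (h : (s'.map (X - C ·)).prod.comp (C ω * X) = C lam * (s.map (X - C ·)).prod) :
    s' = s.map (ω * ·) := by
  rw [prod_X_sub_C_comp_C_mul_X hω] at h
  have hmonic : ∀ u : Multiset K, ((u.map (X - C ·)).prod).Monic := fun u =>
    monic_multiset_prod_of_monic _ _ fun a _ => monic_X_sub_C a
  have hlam : ω ^ Multiset.card s' = lam := by
    simpa only [leadingCoeff_mul, leadingCoeff_C, (hmonic _).leadingCoeff, mul_one]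
      using congrArg leadingCoeff h
  rw [← hlam] at h
  have hroots := congrArg roots (mul_left_cancel₀ (C_ne_zero.2 (pow_ne_zero _ hω)) h)
  rw [roots_multiset_prod_X_sub_C, roots_multiset_prod_X_sub_C] at hroots
  rw [← hroots, Multiset.map_map]
  simp only [comp_def, mul_inv_cancel_left₀ hω, Multiset.map_id']

theorem prod_X_sub_C_comp_eq_of_eq_map_mul (hω : ω ≠ 0) {s s' : Multiset K}
    (h : s' = s.map (ω * ·)) :
    (s'.map (X - C ·)).prod.comp (C ω * X) =
      C (ω ^ Multiset.card s) * (s.map (X - C ·)).prod := by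
  rw [prod_X_sub_C_comp_C_mul_X hω, h, Multiset.card_map, Multiset.map_map (ω⁻¹ * ·)]
  simp only [comp_def, inv_mul_cancel_left₀ hω, Multiset.map_id']

end ScaledRoots

theorem iterate_prodMap_mul_left {R β : Type*} [Monoid R] (ω : R) (σ : Equiv.Perm β) (k : ℕ)
    (p : R × β) : (Prod.map (ω * ·) σ)^[k] p = (ω ^ k * p.1, (σ ^ k) p.2) := by
  rw [Prod.map_iterate, mul_left_iterate, Equiv.Perm.iterate_eq_pow]
  rfl

theorem minimalPeriod_prodMap_mul_left {R β : Type*} [CommMonoidWithZero R] [IsCancelMulZero R]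
    {ω : R} {M : ℕ} (hω : IsPrimitiveRoot ω M) {σ : Equiv.Perm β} (hσ : σ ^ M = 1) {z : R}
    (hz : z ≠ 0) (b : β) :
    minimalPeriod (Prod.map (ω * ·) σ) (z, b) = M := by
  have hperiodic : IsPeriodicPt (Prod.map (ω * ·) σ) M (z, b) := by
    simp [IsPeriodicPt, IsFixedPt, iterate_prodMap_mul_left, hω.pow_eq_one, hσ]
  refine Nat.dvd_antisymm hperiodic.minimalPeriod_dvd (hω.dvd_of_pow_eq_one _ ?_)
  have := (isPeriodicPt_minimalPeriod (Prod.map (ω * ·) σ) (z, b)).eq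
  rw [iterate_prodMap_mul_left] at this
  exact (mul_eq_right₀ hz).1 (congrArg Prod.fst this)

theorem finProdFinEquiv_mk (m : ℕ) {M : ℕ} (k : Fin M) (i : Fin m) :
    finProdFinEquiv (k, i) = ⟨i + m * k, idx_lt i.2 k.2⟩ :=
  Fin.ext (finProdFinEquiv_apply_val _)

theorem isCycPoint_iff_exists_sum_iterOrbit {I : Type} (σ : Equiv.Perm I) {M : ℕ} (hM : 1 ≤ M)
    (ω : ℂ) {m' : ℕ} (t : Fin m' → ℂ) (c : Fin m' → I) :
    IsCycPoint σ M ω t c ↔ ∃ m, ∃ q : Fin m → ℂ × I,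
      Finset.univ.val.map (fun l => (t l, c l)) = ∑ i, iterOrbit (Prod.map (ω * ·) σ) M (q i) := by
  simp only [sum_iterOrbit_eq_map_univ, iterate_prodMap_mul_left]
  constructor
  · rintro ⟨m, rfl, ρ, hρ⟩
    refine ⟨m, fun i => (t (ρ ⟨i, idx_lt' i.2 hM⟩), c (ρ ⟨i, idx_lt' i.2 hM⟩)), ?_⟩
    rw [← Multiset.map_univ_val_equiv (finProdFinEquiv.trans ρ), Multiset.map_map]
    refine Multiset.map_congr rfl fun ⟨k, i⟩ _ => ?_
    simp only [comp_apply, Equiv.trans_apply, finProdFinEquiv_mk, hρ i i.2 k k.2]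
  · rintro ⟨m, q, h⟩
    have hm : m' = M * m := by simpa using congrArg Multiset.card h
    subst hm
    rw [← Multiset.map_univ_val_equiv finProdFinEquiv.symm, Multiset.map_map] at h
    obtain ⟨ρ, hρ⟩ := Multiset.exists_equiv_comp_eq_of_map_univ_eq h
    have hval : ∀ (k : Fin M) (i : Fin m), (t (ρ (finProdFinEquiv (k, i))),
        c (ρ (finProdFinEquiv (k, i)))) = (ω ^ (k : ℕ) * (q i).1, (σ ^ (k : ℕ)) (q i).2) :=
      fun k i => by simpa using congrFun hρ (finProdFinEquiv (k, i))
    refine ⟨m, rfl, ρ, fun i hi k hk => ?_⟩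
    have hik := hval ⟨k, hk⟩ ⟨i, hi⟩
    have hi0 := hval ⟨0, hM⟩ ⟨i, hi⟩
    simp only [finProdFinEquiv_mk, Prod.ext_iff, mul_zero, add_zero, pow_zero, one_mul,
      Equiv.Perm.one_apply] at hik hi0
    rw [hik.1, hik.2, hi0.1, hi0.2]
    exact ⟨rfl, rfl⟩

theorem yPoly_eq_prod_fstFiber {I : Type} [DecidableEq I] {m' : ℕ} (t : Fin m' → ℂ)
    (c : Fin m' → I) (j : I) :
    yPoly t c j =
      (((Finset.univ.val.map fun l => (t l, c l)).fstFiber j).map (X - C ·)).prod := by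
  simp only [yPoly, Finset.prod_eq_multiset_prod, Multiset.fstFiber, Multiset.filter_map,
    Multiset.map_map, Finset.filter_val]
  rfl

theorem isCycPoint_iff_fstFiber {I : Type} [DecidableEq I] {σ : Equiv.Perm I} {M : ℕ}
    (hM : 1 ≤ M) (hσM : σ ^ M = 1) {ω : ℂ} (hω : IsPrimitiveRoot ω M) {m' : ℕ}
    {t : Fin m' → ℂ} {c : Fin m' → I} (ht0 : ∀ j, t j ≠ 0) :
    IsCycPoint σ M ω t c ↔ ∀ j, (Finset.univ.val.map fun l => (t l, c l)).fstFiber (σ j) =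
      ((Finset.univ.val.map fun l => (t l, c l)).fstFiber j).map (ω * ·) := by
  rw [isCycPoint_iff_exists_sum_iterOrbit σ hM, ← Multiset.map_prodMap_eq_self_iff]
  constructor
  · rintro ⟨m, q, hq⟩
    rw [hq, map_sum_iterOrbit]
    exact funext fun p => by simp [iterate_prodMap_mul_left, hω.pow_eq_one, hσM]
  · refine fun h => exists_eq_sum_iterOrbit hM _ h fun x hx => ?_
    obtain ⟨l, -, rfl⟩ := Multiset.mem_map.1 hx
    exact minimalPeriod_prodMap_mul_left hω hσM (ht0 l) (c l)

theorem statement14_general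
    {I : Type} [DecidableEq I]
    (σ : Equiv.Perm I) (M : ℕ) (hM : 1 ≤ M) (hσM : σ ^ M = 1)
    (ω : ℂ) (hω : IsPrimitiveRoot ω M)
    {m' : ℕ} (t : Fin m' → ℂ) (c : Fin m' → I)
    (ht0 : ∀ j, t j ≠ 0) :
    (IsCycPoint σ M ω t c ↔
      ∀ j : I, ∃ lamb : ℂ, lamb ≠ 0 ∧
        (yPoly t c (σ j)).comp (C ω * X) = C lamb * yPoly t c j) ∧
    (IsCycPoint σ M ω t c ↔
      ∀ j : I, (yPoly t c (σ j)).comp (C ω * X) =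
        C (ω ^ (yPoly t c j).natDegree) * yPoly t c j) := by
  have hω0 : ω ≠ 0 := hω.ne_zero (by omega)
  simp only [isCycPoint_iff_fstFiber hM hσM hω ht0, yPoly_eq_prod_fstFiber,
    natDegree_multiset_prod_X_sub_C_eq_card]
  refine ⟨forall_congr' fun _ => ⟨fun h => ?_, fun ⟨_, _, h⟩ => ?_⟩,
    forall_congr' fun _ => ⟨?_, ?_⟩⟩
  · exact ⟨_, pow_ne_zero _ hω0, prod_X_sub_C_comp_eq_of_eq_map_mul hω0 h⟩
  · exact eq_map_mul_of_prod_X_sub_C_comp_eq hω0 h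
  · exact prod_X_sub_C_comp_eq_of_eq_map_mul hω0
  · exact eq_map_mul_of_prod_X_sub_C_comp_eq hω0

/-- Lemma 4.4: assuming all t_j ≠ 0, the pair (t,c) is a cyclotomic point
iff y_{σ(j)}(ωx) ≃ y_j(x) for all j; and, the y_i being monic, iff
y_{σ(j)}(ωx) = ω^{deg y_j}·y_j(x) for all j. -/
theorem statement14
    {I : Type} [Fintype I] [DecidableEq I]
    (σ : Equiv.Perm I) (M : ℕ) (hM : 1 ≤ M) (hσM : σ ^ M = 1)
    (ω : ℂ) (hω : IsPrimitiveRoot ω M)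
    {m' : ℕ} (t : Fin m' → ℂ) (c : Fin m' → I)
    (ht0 : ∀ j, t j ≠ 0) :
    (IsCycPoint σ M ω t c ↔
      ∀ j : I, ∃ lamb : ℂ, lamb ≠ 0 ∧
        (yPoly t c (σ j)).comp (C ω * X) = C lamb * yPoly t c j) ∧
    (IsCycPoint σ M ω t c ↔
      ∀ j : I, (yPoly t c (σ j)).comp (C ω * X) =
        C (ω ^ (yPoly t c j).natDegree) * yPoly t c j) :=
  statement14_general σ M hM hσM ω hω t c ht0
end
end
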